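/- arXiv:2601.22940 — 2 statements merged into one kernel-verified Lean document; each statement's English description precedes it below -/
import Mathlib

section
/- Let f : ℝ₊ → ℝ be bounded, continuous, and integrable on (0,∞), and define u(t,x) = ∫₀^∞ K(t,x,y) f(y) dy for t > 0, x > 0. Then u satisfies the clamped biharmonic heat equation ∂ₜ u(t,x) = − ∂ₓ⁴ u(t,x) for all t > 0 and x > 0. -/
open MeasureTheory Filter Set

noncomputable def Phi (r : ℝ) : ℝ := Real.exp (-r) + Real.sin r - Real.cos r

noncomputable def K (t x y : ℝ) : ℝ :=
  (1 / Real.pi) * ∫ k in Set.Ioi (0:ℝ), Real.exp (-k ^ 4 * t) * Phi (k * x) * Phi (k * y)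

/-!
By Fubini, `u(t,x) = π⁻¹ ∫₀^∞ e^{-k⁴t} Φ(kx) g(k) dk` with `g(k) = ∫₀^∞ Φ(ky) f(y) dy`, and
`|g| ≤ 3 ‖f‖₁` because `|Φ| ≤ 3` on `[0,∞)`. Since `Φ'''' = Φ`, differentiating four times in `x`
brings down `k⁴`, exactly as one differentiation of `e^{-k⁴t}` in `t` brings down `-k⁴`. Every
differentiation under the integral sign is dominated by a multiple of `kⁿ e^{-k⁴t₀}`.
-/

open Real

/-- `Φ⁽ⁿ⁾`: each differentiation shifts the trigonometric part by a quarter period. -/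
noncomputable def phiDeriv (n : ℕ) (r : ℝ) : ℝ :=
  (-1) ^ n * exp (-r) + sin (r + n * (π / 2)) - cos (r + n * (π / 2))

lemma phiDeriv_zero : phiDeriv 0 = Phi := by
  ext r
  simp [phiDeriv, Phi]

lemma phiDeriv_four : phiDeriv 4 = Phi := by
  ext r
  have h : r + ((4 : ℕ) : ℝ) * (π / 2) = r + 2 * π := by push_cast; ring
  simp only [phiDeriv, Phi, h, sin_add_two_pi, cos_add_two_pi]
  norm_num

lemma hasDerivAt_phiDeriv (n : ℕ) (r : ℝ) :
    HasDerivAt (phiDeriv n) (phiDeriv (n + 1) r) r := by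
  have hshift : r + ((n + 1 : ℕ) : ℝ) * (π / 2) = r + n * (π / 2) + π / 2 := by
    push_cast; ring
  have hθ := (hasDerivAt_id' r).add_const (n * (π / 2))
  refine ((((hasDerivAt_neg r).exp.const_mul ((-1 : ℝ) ^ n)).add hθ.sin).sub hθ.cos).congr_deriv ?_
  rw [phiDeriv, hshift, sin_add_pi_div_two, cos_add_pi_div_two]
  ring

@[fun_prop]
lemma continuous_phiDeriv (n : ℕ) : Continuous (phiDeriv n) :=
  continuous_iff_continuousAt.2 fun r => (hasDerivAt_phiDeriv n r).continuousAt

lemma abs_phiDeriv_le (n : ℕ) {r : ℝ} (hr : 0 ≤ r) : |phiDeriv n r| ≤ 3 := by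
  have hexp : |(-1 : ℝ) ^ n * exp (-r)| ≤ 1 := by
    rw [abs_mul, abs_pow, abs_neg, abs_one, one_pow, one_mul, abs_of_pos (exp_pos _)]
    exact exp_le_one_iff.2 (neg_nonpos.2 hr)
  have hsub := abs_sub ((-1 : ℝ) ^ n * exp (-r) + sin (r + n * (π / 2))) (cos (r + n * (π / 2)))
  have hadd := abs_add_le ((-1 : ℝ) ^ n * exp (-r)) (sin (r + n * (π / 2)))
  rw [phiDeriv]
  linarith [abs_sin_le_one (r + n * (π / 2)), abs_cos_le_one (r + n * (π / 2))]

@[fun_prop]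
lemma continuous_Phi : Continuous Phi := phiDeriv_zero ▸ continuous_phiDeriv 0

lemma abs_Phi_le {r : ℝ} (hr : 0 ≤ r) : |Phi r| ≤ 3 := phiDeriv_zero ▸ abs_phiDeriv_le 0 hr

lemma integrableOn_pow_mul_exp_neg_pow_mul {p : ℕ} (hp : 0 < p) (n : ℕ) {t : ℝ} (ht : 0 < t) :
    IntegrableOn (fun k : ℝ => k ^ n * exp (-k ^ p * t)) (Ioi 0) := by
  refine (integrableOn_rpow_mul_exp_neg_mul_rpow (s := n) (by linarith [n.cast_nonneg (α := ℝ)])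
    (Nat.cast_pos.2 hp) ht).congr_fun (fun k hk => ?_) measurableSet_Ioi
  simp only [rpow_natCast]
  ring_nf

noncomputable def phiTransform (f : ℝ → ℝ) (k : ℝ) : ℝ := ∫ y in Ioi 0, Phi (k * y) * f y

section phiTransform

variable {f : ℝ → ℝ}

lemma aestronglyMeasurable_phiTransform (hf : IntegrableOn f (Ioi 0)) :
    AEStronglyMeasurable (phiTransform f) (volume.restrict (Ioi 0)) := by
  have h : AEStronglyMeasurable (fun p : ℝ × ℝ => Phi (p.1 * p.2) * f p.2)
      ((volume.restrict (Ioi 0)).prod (volume.restrict (Ioi 0))) :=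
    (Continuous.aestronglyMeasurable (by fun_prop)).mul hf.1.comp_snd
  exact h.integral_prod_right'

lemma abs_phiTransform_le (hf : IntegrableOn f (Ioi 0)) {k : ℝ} (hk : 0 ≤ k) :
    |phiTransform f k| ≤ 3 * ∫ y in Ioi 0, |f y| := by
  rw [← integral_const_mul, ← Real.norm_eq_abs]
  refine norm_integral_le_of_norm_le (hf.abs.const_mul 3) ?_
  filter_upwards [ae_restrict_mem measurableSet_Ioi] with y hy
  rw [norm_mul, Real.norm_eq_abs, Real.norm_eq_abs]
  exact mul_le_mul_of_nonneg_right (abs_Phi_le (mul_nonneg hk hy.le)) (abs_nonneg _)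

end phiTransform

/-- With `g = phiTransform f`, `π⁻¹ * spectralIntegral g n t x` is `∂ₓⁿ u(t,x)`. -/
noncomputable def spectralIntegrand (g : ℝ → ℝ) (n : ℕ) (t z k : ℝ) : ℝ :=
  k ^ n * exp (-k ^ 4 * t) * phiDeriv n (k * z) * g k

noncomputable def spectralIntegral (g : ℝ → ℝ) (n : ℕ) (t z : ℝ) : ℝ :=
  ∫ k in Ioi 0, spectralIntegrand g n t z k

section spectral

variable {g : ℝ → ℝ} {B : ℝ} {n : ℕ} {t z : ℝ}

lemma aestronglyMeasurable_spectralIntegrand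
    (hg : AEStronglyMeasurable g (volume.restrict (Ioi 0))) :
    AEStronglyMeasurable (spectralIntegrand g n t z) (volume.restrict (Ioi 0)) := by
  refine Continuous.aestronglyMeasurable ?_ |>.mul hg
  fun_prop

lemma norm_spectralIntegrand_le (hB : ∀ k > 0, |g k| ≤ B) {k : ℝ} (hk : 0 < k) (hz : 0 ≤ z) :
    ‖spectralIntegrand g n t z k‖ ≤ k ^ n * exp (-k ^ 4 * t) * (3 * B) := by
  rw [spectralIntegrand, Real.norm_eq_abs, abs_mul, abs_mul, abs_mul,
    abs_of_nonneg (pow_nonneg hk.le n), abs_of_pos (exp_pos _), mul_assoc _ |_|]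
  gcongr
  · exact abs_phiDeriv_le n (mul_nonneg hk.le hz)
  · exact hB k hk

lemma integrable_spectralIntegrand (hg : AEStronglyMeasurable g (volume.restrict (Ioi 0)))
    (hB : ∀ k > 0, |g k| ≤ B) (ht : 0 < t) (hz : 0 ≤ z) :
    Integrable (spectralIntegrand g n t z) (volume.restrict (Ioi 0)) :=
  ((integrableOn_pow_mul_exp_neg_pow_mul four_pos n ht).mul_const _).mono'
    (aestronglyMeasurable_spectralIntegrand hg) <|
    (ae_restrict_mem measurableSet_Ioi).mono fun _ hk => norm_spectralIntegrand_le hB hk hz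

lemma hasDerivAt_spectralIntegrand_space (k : ℝ) :
    HasDerivAt (spectralIntegrand g n t · k) (spectralIntegrand g (n + 1) t z k) z := by
  have h := (hasDerivAt_phiDeriv n (k * z)).comp z ((hasDerivAt_id' z).const_mul k)
  refine ((h.const_mul (k ^ n * exp (-k ^ 4 * t))).mul_const (g k)).congr_deriv ?_
  simp only [spectralIntegrand]
  ring

lemma hasDerivAt_spectralIntegrand_time (k : ℝ) :
    HasDerivAt (spectralIntegrand g 0 · z k) (-spectralIntegrand g 4 t z k) t := by
  have h := ((hasDerivAt_id' t).const_mul (-k ^ 4)).exp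
  refine ((h.const_mul (k ^ 0)).mul_const (phiDeriv 0 (k * z))).mul_const (g k) |>.congr_deriv ?_
  simp only [spectralIntegrand, phiDeriv_zero, phiDeriv_four]
  ring

end spectral

section spectralIntegral

variable {g : ℝ → ℝ} {B : ℝ} {t : ℝ}

lemma hasDerivAt_spectralIntegral_space (hg : AEStronglyMeasurable g (volume.restrict (Ioi 0)))
    (hB : ∀ k > 0, |g k| ≤ B) (n : ℕ) (ht : 0 < t) {z : ℝ} (hz : 0 < z) :
    HasDerivAt (spectralIntegral g n t) (spectralIntegral g (n + 1) t z) z :=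
  (hasDerivAt_integral_of_dominated_loc_of_deriv_le (Ioi_mem_nhds hz)
    (F := fun z k => spectralIntegrand g n t z k)
    (.of_forall fun _ => aestronglyMeasurable_spectralIntegrand hg)
    (integrable_spectralIntegrand hg hB ht hz.le) (aestronglyMeasurable_spectralIntegrand hg)
    ((ae_restrict_mem measurableSet_Ioi).mono fun _ hk _ hz' =>
      norm_spectralIntegrand_le hB hk hz'.out.le)
    ((integrableOn_pow_mul_exp_neg_pow_mul four_pos (n + 1) ht).mul_const (3 * B))
    (.of_forall fun k _ _ => hasDerivAt_spectralIntegrand_space k)).2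

lemma hasDerivAt_spectralIntegral_time (hg : AEStronglyMeasurable g (volume.restrict (Ioi 0)))
    (hB : ∀ k > 0, |g k| ≤ B) (ht : 0 < t) {x : ℝ} (hx : 0 ≤ x) :
    HasDerivAt (spectralIntegral g 0 · x) (-spectralIntegral g 4 t x) t := by
  have hbound : ∀ k > 0, ∀ s ∈ Ioi (t / 2),
      ‖-spectralIntegrand g 4 s x k‖ ≤ k ^ 4 * exp (-k ^ 4 * (t / 2)) * (3 * B) := by
    intro k hk s hs
    rw [norm_neg]
    refine (norm_spectralIntegrand_le hB hk hx).trans ?_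
    have hexp : exp (-k ^ 4 * s) ≤ exp (-k ^ 4 * (t / 2)) :=
      exp_le_exp.2 (by nlinarith [pow_pos hk 4, hs.out])
    have hB0 : 0 ≤ B := (abs_nonneg _).trans (hB k hk)
    gcongr
  rw [spectralIntegral, ← integral_neg]
  exact (hasDerivAt_integral_of_dominated_loc_of_deriv_le (Ioi_mem_nhds (half_lt_self ht))
    (F := fun s k => spectralIntegrand g 0 s x k)
    (.of_forall fun _ => aestronglyMeasurable_spectralIntegrand hg)
    (integrable_spectralIntegrand hg hB ht hx) (aestronglyMeasurable_spectralIntegrand hg).neg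
    ((ae_restrict_mem measurableSet_Ioi).mono fun k hk => hbound k hk)
    ((integrableOn_pow_mul_exp_neg_pow_mul four_pos 4 (half_pos ht)).mul_const (3 * B))
    (.of_forall fun k _ _ => hasDerivAt_spectralIntegrand_time k)).2

end spectralIntegral

lemma eqOn_iteratedDeriv_of_hasDerivAt {𝕜 E : Type*} [NontriviallyNormedField 𝕜]
    [NormedAddCommGroup E] [NormedSpace 𝕜 E] {F : 𝕜 → E} {G : ℕ → 𝕜 → E} {s : Set 𝕜}
    (hs : IsOpen s) (hF : EqOn F (G 0) s)
    (hG : ∀ n, ∀ z ∈ s, HasDerivAt (G n) (G (n + 1) z) z) (n : ℕ) :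
    EqOn (iteratedDeriv n F) (G n) s := by
  induction n with
  | zero => simpa using hF
  | succ n ih =>
    intro z hz
    rw [iteratedDeriv_succ, (ih.eventuallyEq_of_mem (hs.mem_nhds hz)).deriv_eq]
    exact (hG n z hz).deriv

section kernel

variable {f : ℝ → ℝ} {t x : ℝ}

lemma integrable_kernelIntegrand (hf : IntegrableOn f (Ioi 0)) (ht : 0 < t) (hx : 0 ≤ x) :
    Integrable (Function.uncurry fun y k => exp (-k ^ 4 * t) * Phi (k * x) * Phi (k * y) * f y)
      ((volume.restrict (Ioi 0)).prod (volume.restrict (Ioi 0))) := by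
  refine ((hf.abs.const_mul 9).mul_prod (integrableOn_pow_mul_exp_neg_pow_mul four_pos 0 ht)).mono'
    ((Continuous.aestronglyMeasurable (by fun_prop)).mul hf.1.comp_fst) ?_
  rw [Measure.prod_restrict]
  filter_upwards [ae_restrict_mem (measurableSet_Ioi.prod measurableSet_Ioi)]
    with ⟨y, k⟩ ⟨hy, hk⟩
  have hΦx := abs_Phi_le (mul_nonneg hk.le hx)
  have hΦy := abs_Phi_le (mul_nonneg hk.le hy.le)
  simp only [Function.uncurry, Real.norm_eq_abs, abs_mul, abs_of_pos (exp_pos _), pow_zero,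
    one_mul]
  calc exp (-k ^ 4 * t) * |Phi (k * x)| * |Phi (k * y)| * |f y|
      ≤ exp (-k ^ 4 * t) * 3 * 3 * |f y| := by gcongr
    _ = 9 * |f y| * exp (-k ^ 4 * t) := by ring

lemma integral_K_mul (hf : IntegrableOn f (Ioi 0)) (ht : 0 < t) (hx : 0 ≤ x) :
    ∫ y in Ioi 0, K t x y * f y = 1 / π * spectralIntegral (phiTransform f) 0 t x := by
  calc ∫ y in Ioi 0, K t x y * f y
      = ∫ y in Ioi 0, 1 / π * ∫ k in Ioi 0, exp (-k ^ 4 * t) * Phi (k * x) * Phi (k * y) * f y := by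
        simp only [K, mul_assoc, ← integral_mul_const]
    _ = 1 / π * ∫ k in Ioi 0, ∫ y in Ioi 0,
          exp (-k ^ 4 * t) * Phi (k * x) * Phi (k * y) * f y := by
        rw [integral_const_mul, integral_integral_swap (integrable_kernelIntegrand hf ht hx)]
    _ = 1 / π * spectralIntegral (phiTransform f) 0 t x := by
        simp only [spectralIntegral, spectralIntegrand, phiTransform, phiDeriv_zero, pow_zero,
          one_mul, mul_assoc, integral_const_mul]

end kernel

theorem stmt0_general (f : ℝ → ℝ)
    (hf_int : IntegrableOn f (Set.Ioi 0))
    (u : ℝ → ℝ → ℝ)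
    (hu : ∀ t x, u t x = ∫ y in Set.Ioi (0:ℝ), K t x y * f y) :
    ∀ t > (0:ℝ), ∀ x > (0:ℝ),
      HasDerivAt (fun s => u s x) (-(iteratedDeriv 4 (fun z => u t z) x)) t := by
  intro t ht x hx
  have hg := aestronglyMeasurable_phiTransform hf_int
  have hB : ∀ k > 0, |phiTransform f k| ≤ 3 * ∫ y in Ioi 0, |f y| :=
    fun k hk => abs_phiTransform_le hf_int hk.le
  have hu_eq : ∀ s > 0, ∀ z ≥ 0, u s z = 1 / π * spectralIntegral (phiTransform f) 0 s z :=
    fun s hs z hz => (hu s z).trans (integral_K_mul hf_int hs hz)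
  have hspace : iteratedDeriv 4 (u t) x = 1 / π * spectralIntegral (phiTransform f) 4 t x :=
    eqOn_iteratedDeriv_of_hasDerivAt isOpen_Ioi
      (G := fun n z => 1 / π * spectralIntegral (phiTransform f) n t z)
      (fun z hz => hu_eq t ht z hz.le)
      (fun n z hz => (hasDerivAt_spectralIntegral_space hg hB n ht hz).const_mul _) 4 hx
  rw [hspace, ← mul_neg]
  refine ((hasDerivAt_spectralIntegral_time hg hB ht hx.le).const_mul _).congr_of_eventuallyEq ?_
  filter_upwards [Ioi_mem_nhds ht] with s hs using hu_eq s hs x hx.le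

/-- `u(t,x) = ∫₀^∞ K(t,x,y) f(y) dy` satisfies `∂ₜ u = -∂ₓ⁴ u` for `t > 0, x > 0`. -/
theorem stmt0 (f : ℝ → ℝ)
    (hf_cont : ContinuousOn f (Set.Ici 0))
    (hf_bdd : ∃ M, ∀ x ≥ (0:ℝ), |f x| ≤ M)
    (hf_int : IntegrableOn f (Set.Ioi 0))
    (u : ℝ → ℝ → ℝ)
    (hu : ∀ t x, u t x = ∫ y in Set.Ioi (0:ℝ), K t x y * f y) :
    ∀ t > (0:ℝ), ∀ x > (0:ℝ),
      HasDerivAt (fun s => u s x) (-(iteratedDeriv 4 (fun z => u t z) x)) t :=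
  stmt0_general f hf_int u hu
end

section
/- For every integer j ≥ 0, every t > 0, and all x, y > 0, the y-derivatives of the clamped biharmonic heat kernel agree with x-derivatives of the modified kernels: ∂_y^{4j} K(t,x,y) = ∂ₓ^{4j} K(t,x,y), ∂_y^{4j+1} K(t,x,y) = ∂ₓ^{4j+1} K_a(t,x,y), ∂_y^{4j+2} K(t,x,y) = ∂ₓ^{4j+2} K_b(t,x,y), and ∂_y^{4j+3} K(t,x,y) = ∂ₓ^{4j+3} K_c(t,x,y). -/
open MeasureTheory Filter Set

/-- `Φ₁(r) = e^{-r} - sin r - cos r`. -/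
noncomputable def Phi1 (r : ℝ) : ℝ := Real.exp (-r) - Real.sin r - Real.cos r

/-- `Φ₂(r) = e^{-r} - sin r + cos r`. -/
noncomputable def Phi2 (r : ℝ) : ℝ := Real.exp (-r) - Real.sin r + Real.cos r

/-- `Φ₃(r) = e^{-r} + sin r + cos r`. -/
noncomputable def Phi3 (r : ℝ) : ℝ := Real.exp (-r) + Real.sin r + Real.cos r

/-- The modified kernel `K_a`. -/
noncomputable def Ka (t x y : ℝ) : ℝ :=
  (1 / Real.pi) * ∫ k in Set.Ioi (0:ℝ), Real.exp (-k ^ 4 * t) * Phi3 (k * x) * Phi1 (k * y)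

/-- The modified kernel `K_b`. -/
noncomputable def Kb (t x y : ℝ) : ℝ :=
  (1 / Real.pi) * ∫ k in Set.Ioi (0:ℝ), Real.exp (-k ^ 4 * t) * Phi2 (k * x) * Phi2 (k * y)

/-- The modified kernel `K_c`. -/
noncomputable def Kc (t x y : ℝ) : ℝ :=
  (1 / Real.pi) * ∫ k in Set.Ioi (0:ℝ), Real.exp (-k ^ 4 * t) * Phi1 (k * x) * Phi3 (k * y)

/-!
The profiles satisfy `Φᵢ' = -Φᵢ₊₁` with indices mod 4 (`Φ₀ = Φ`). Differentiating under the
integral sign, which is justified by the domination `e^{-k⁴t} kⁿ · const` on `k > 0`, each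
spatial derivative of `∫ e^{-k⁴t} kⁿ Φᵢ(kx) g(ky) dk` produces a factor `-k` and shifts `Φᵢ` to
`Φᵢ₊₁`. Hence, by the symmetry of `K`, `∂_y^m K` and `∂_x^m` of the kernel with profiles
`Φᵢ(kx) Φₗ(ky)` both equal `(-1)^m/π ∫ e^{-k⁴t} k^m Φ(kx) Φₘ(ky) dk` as soon as
`i + m ≡ 0` and `l ≡ m (mod 4)`.
-/

open Real Topology

noncomputable def PhiCycle : ℕ → ℝ → ℝ
  | 0 => Phi
  | 1 => Phi1
  | 2 => Phi2
  | 3 => Phi3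
  | n + 4 => PhiCycle n

theorem phiCycle_mod_four : ∀ n, PhiCycle (n % 4) = PhiCycle n
  | 0 | 1 | 2 | 3 => rfl
  | n + 4 => by rw [Nat.add_mod_right, phiCycle_mod_four n]; rfl

theorem phiCycle_congr {m n : ℕ} (h : m % 4 = n % 4) : PhiCycle m = PhiCycle n := by
  rw [← phiCycle_mod_four m, h, phiCycle_mod_four]

theorem hasDerivAt_exp_neg (r : ℝ) : HasDerivAt (fun x => exp (-x)) (-exp (-r)) r := by
  simpa using (hasDerivAt_neg r).exp

theorem hasDerivAt_phiCycle : ∀ n r, HasDerivAt (PhiCycle n) (-PhiCycle (n + 1) r) r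
  | 0, r => (((hasDerivAt_exp_neg r).add (hasDerivAt_sin r)).sub (hasDerivAt_cos r)).congr_deriv
      (by simp only [PhiCycle, Phi1]; ring)
  | 1, r => (((hasDerivAt_exp_neg r).sub (hasDerivAt_sin r)).sub (hasDerivAt_cos r)).congr_deriv
      (by simp only [PhiCycle, Phi2]; ring)
  | 2, r => (((hasDerivAt_exp_neg r).sub (hasDerivAt_sin r)).add (hasDerivAt_cos r)).congr_deriv
      (by simp only [PhiCycle, Phi3]; ring)
  | 3, r => (((hasDerivAt_exp_neg r).add (hasDerivAt_sin r)).add (hasDerivAt_cos r)).congr_deriv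
      (by simp only [PhiCycle, Phi]; ring)
  | n + 4, r => hasDerivAt_phiCycle n r

theorem continuous_phiCycle (n : ℕ) : Continuous (PhiCycle n) :=
  continuous_iff_continuousAt.2 fun r => (hasDerivAt_phiCycle n r).continuousAt

theorem abs_phiCycle_le {r : ℝ} (hr : 0 ≤ r) : ∀ n, |PhiCycle n r| ≤ 3
  | 0 | 1 | 2 | 3 => by
    have he : 0 < exp (-r) ∧ exp (-r) ≤ 1 := ⟨exp_pos _, exp_le_one_iff.2 (by linarith)⟩
    obtain ⟨hs, hs'⟩ := abs_le.1 (abs_sin_le_one r)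
    obtain ⟨hc, hc'⟩ := abs_le.1 (abs_cos_le_one r)
    simp only [PhiCycle, Phi, Phi1, Phi2, Phi3]
    exact abs_le.2 ⟨by linarith, by linarith⟩
  | n + 4 => abs_phiCycle_le hr n

noncomputable def biharmonicIntegral (n : ℕ) (f g : ℝ → ℝ) (t x y : ℝ) : ℝ :=
  ∫ k in Ioi 0, exp (-k ^ 4 * t) * k ^ n * f (k * x) * g (k * y)

theorem biharmonicIntegral_comm (n : ℕ) (f g : ℝ → ℝ) (t x y : ℝ) :
    biharmonicIntegral n f g t x y = biharmonicIntegral n g f t y x := by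
  simp only [biharmonicIntegral, mul_right_comm _ (f _)]

theorem biharmonicIntegral_neg (n : ℕ) (f g : ℝ → ℝ) (t x y : ℝ) :
    biharmonicIntegral n (fun r => -f r) g t x y = -biharmonicIntegral n f g t x y := by
  simp only [biharmonicIntegral, mul_neg, neg_mul, integral_neg]

theorem integrableOn_exp_neg_pow_four_mul_pow {t : ℝ} (ht : 0 < t) (n : ℕ) :
    IntegrableOn (fun k : ℝ => exp (-k ^ 4 * t) * k ^ n) (Ioi 0) := by
  refine (integrableOn_rpow_mul_exp_neg_mul_rpow (s := n) (by linarith [n.cast_nonneg (α := ℝ)])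
    four_pos ht).congr_fun (fun k _ => ?_) measurableSet_Ioi
  simp only [Real.rpow_natCast, show (4 : ℝ) = (4 : ℕ) by norm_num]
  ring_nf

theorem norm_biharmonicIntegrand_le {t k a b C : ℝ} (n : ℕ) (hk : 0 ≤ k) (ha : |a| ≤ C)
    (hb : |b| ≤ C) :
    ‖exp (-k ^ 4 * t) * k ^ n * a * b‖ ≤ exp (-k ^ 4 * t) * k ^ n * (C * C) := by
  have hw : 0 ≤ exp (-k ^ 4 * t) * k ^ n := by positivity
  rw [norm_mul, norm_mul, Real.norm_of_nonneg hw, mul_assoc]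
  exact mul_le_mul_of_nonneg_left (mul_le_mul ha hb (abs_nonneg b) ((abs_nonneg a).trans ha)) hw

section biharmonicIntegral

variable {f f' g : ℝ → ℝ} {C t x y : ℝ}

theorem integrableOn_biharmonicIntegrand (n : ℕ) (hf : Continuous f) (hg : Continuous g)
    (hfC : ∀ r, 0 ≤ r → |f r| ≤ C) (hgC : ∀ r, 0 ≤ r → |g r| ≤ C)
    (ht : 0 < t) (hx : 0 ≤ x) (hy : 0 ≤ y) :
    IntegrableOn (fun k => exp (-k ^ 4 * t) * k ^ n * f (k * x) * g (k * y)) (Ioi 0) := by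
  refine ((integrableOn_exp_neg_pow_four_mul_pow ht n).mul_const (C * C)).mono' (by fun_prop)
    ((ae_restrict_iff' measurableSet_Ioi).2 (ae_of_all _ fun k hk => ?_))
  have hk : 0 ≤ k := le_of_lt hk
  exact norm_biharmonicIntegrand_le n hk (hfC _ (mul_nonneg hk hx)) (hgC _ (mul_nonneg hk hy))

theorem hasDerivAt_biharmonicIntegral (n : ℕ) (hf : ∀ r, HasDerivAt f (f' r) r)
    (hf' : Continuous f') (hg : Continuous g) (hfC : ∀ r, 0 ≤ r → |f r| ≤ C)
    (hf'C : ∀ r, 0 ≤ r → |f' r| ≤ C) (hgC : ∀ r, 0 ≤ r → |g r| ≤ C) (ht : 0 < t)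
    (hx : 0 < x) (hy : 0 ≤ y) :
    HasDerivAt (fun z => biharmonicIntegral n f g t z y)
      (biharmonicIntegral (n + 1) f' g t x y) x := by
  have hfc : Continuous f := continuous_iff_continuousAt.2 fun r => (hf r).continuousAt
  refine (hasDerivAt_integral_of_dominated_loc_of_deriv_le (μ := volume.restrict (Ioi 0))
    (F := fun z k => exp (-k ^ 4 * t) * k ^ n * f (k * z) * g (k * y))
    (F' := fun z k => exp (-k ^ 4 * t) * k ^ (n + 1) * f' (k * z) * g (k * y)) (Ioi_mem_nhds hx)
    (Eventually.of_forall fun z => (by fun_prop : Continuous _).aestronglyMeasurable)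
    (integrableOn_biharmonicIntegrand n hfc hg hfC hgC ht hx.le hy)
    (by fun_prop : Continuous _).aestronglyMeasurable ?_
    ((integrableOn_exp_neg_pow_four_mul_pow ht (n + 1)).mul_const (C * C)) ?_).2
  · refine (ae_restrict_iff' measurableSet_Ioi).2 (ae_of_all _ fun k hk z hz => ?_)
    have hk : 0 ≤ k := le_of_lt hk
    have hz : 0 ≤ z := le_of_lt hz
    exact norm_biharmonicIntegrand_le (n + 1) hk (hf'C _ (mul_nonneg hk hz))
      (hgC _ (mul_nonneg hk hy))
  · refine ae_of_all _ fun k z _ => ?_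
    have hfk := (hf (k * z)).comp z ((hasDerivAt_id' z).const_mul k)
    exact ((hfk.const_mul (exp (-k ^ 4 * t) * k ^ n)).mul_const (g (k * y))).congr_deriv
      (by ring)

theorem iteratedDeriv_biharmonicIntegral_phiCycle (n i : ℕ) (hg : Continuous g)
    (hgC : ∀ r, 0 ≤ r → |g r| ≤ C) (ht : 0 < t) (hy : 0 ≤ y) (m : ℕ) (hx : 0 < x) :
    iteratedDeriv m (fun z => biharmonicIntegral n (PhiCycle i) g t z y) x
      = (-1) ^ m * biharmonicIntegral (n + m) (PhiCycle (i + m)) g t x y := by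
  induction m generalizing x with
  | zero => simp
  | succ m ih =>
    have hev : iteratedDeriv m (fun z => biharmonicIntegral n (PhiCycle i) g t z y)
        =ᶠ[𝓝 x] fun z => (-1) ^ m * biharmonicIntegral (n + m) (PhiCycle (i + m)) g t z y :=
      eventually_of_mem (Ioi_mem_nhds hx) fun z hz => ih hz
    have hbound : ∀ j r, 0 ≤ r → |PhiCycle j r| ≤ max C 3 :=
      fun j r hr => (abs_phiCycle_le hr j).trans (le_max_right _ _)
    have hderiv := hasDerivAt_biharmonicIntegral (n + m) (hasDerivAt_phiCycle (i + m))
      (continuous_phiCycle _).neg hg (hbound _) (fun r hr => (abs_neg (PhiCycle _ r)).trans_le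
      (hbound _ r hr)) (fun r hr => (hgC r hr).trans (le_max_left _ _)) ht hx hy
    rw [iteratedDeriv_succ, hev.deriv_eq, (hderiv.const_mul _).deriv, biharmonicIntegral_neg,
      pow_succ, ← add_assoc, ← add_assoc]
    ring

end biharmonicIntegral

noncomputable def biharmonicKernel (f g : ℝ → ℝ) (t x y : ℝ) : ℝ :=
  (1 / π) * ∫ k in Ioi 0, exp (-k ^ 4 * t) * f (k * x) * g (k * y)

theorem biharmonicKernel_comm (f g : ℝ → ℝ) (t x y : ℝ) :
    biharmonicKernel f g t x y = biharmonicKernel g f t y x := by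
  simp only [biharmonicKernel, mul_right_comm _ (f _)]

theorem biharmonicKernel_eq_biharmonicIntegral (f g : ℝ → ℝ) (t x y : ℝ) :
    biharmonicKernel f g t x y = 1 / π * biharmonicIntegral 0 f g t x y := by
  simp only [biharmonicKernel, biharmonicIntegral, pow_zero, mul_one]

theorem iteratedDeriv_biharmonicKernel_phiCycle {t x y : ℝ} (m i l : ℕ) (ht : 0 < t)
    (hx : 0 < x) (hy : 0 ≤ y) :
    iteratedDeriv m (fun z => biharmonicKernel (PhiCycle i) (PhiCycle l) t z y) x
      = 1 / π * ((-1) ^ m * biharmonicIntegral m (PhiCycle (i + m)) (PhiCycle l) t x y) := by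
  simp only [biharmonicKernel_eq_biharmonicIntegral, iteratedDeriv_const_mul_field]
  rw [iteratedDeriv_biharmonicIntegral_phiCycle 0 i (continuous_phiCycle l)
    (fun r hr => abs_phiCycle_le hr l) ht hy m hx, zero_add]

theorem iteratedDeriv_K_snd_eq_fst {t x y : ℝ} {m i l : ℕ} (ht : 0 < t) (hx : 0 < x)
    (hy : 0 < y) (hi : (i + m) % 4 = 0) (hl : l % 4 = m % 4) :
    iteratedDeriv m (fun w => K t x w) y
      = iteratedDeriv m (fun z => biharmonicKernel (PhiCycle i) (PhiCycle l) t z y) x := by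
  have hK : (fun w => K t x w) = fun w => biharmonicKernel (PhiCycle 0) (PhiCycle 0) t w x :=
    funext fun w => biharmonicKernel_comm Phi Phi t x w
  rw [hK, iteratedDeriv_biharmonicKernel_phiCycle m 0 0 ht hy hx.le,
    iteratedDeriv_biharmonicKernel_phiCycle m i l ht hx hy.le, biharmonicIntegral_comm, zero_add,
    phiCycle_congr (n := 0) hi, phiCycle_congr hl]

/-- the `y`-derivatives of the kernel `K` agree with `x`-derivatives of the
kernels `K`, `K_a`, `K_b`, `K_c` according to the residue of the order modulo 4. -/
theorem stmt9 :
    ∀ j : ℕ, ∀ t > (0:ℝ), ∀ x > (0:ℝ), ∀ y > (0:ℝ),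
      iteratedDeriv (4 * j) (fun w => K t x w) y
        = iteratedDeriv (4 * j) (fun z => K t z y) x ∧
      iteratedDeriv (4 * j + 1) (fun w => K t x w) y
        = iteratedDeriv (4 * j + 1) (fun z => Ka t z y) x ∧
      iteratedDeriv (4 * j + 2) (fun w => K t x w) y
        = iteratedDeriv (4 * j + 2) (fun z => Kb t z y) x ∧
      iteratedDeriv (4 * j + 3) (fun w => K t x w) y
        = iteratedDeriv (4 * j + 3) (fun z => Kc t z y) x := by
  intro j t ht x hx y hy
  -- `K`, `Ka`, `Kb`, `Kc` are definitionally `biharmonicKernel (PhiCycle i) (PhiCycle l)`.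
  exact ⟨iteratedDeriv_K_snd_eq_fst (i := 0) (l := 0) ht hx hy (by omega) (by omega),
    iteratedDeriv_K_snd_eq_fst (i := 3) (l := 1) ht hx hy (by omega) (by omega),
    iteratedDeriv_K_snd_eq_fst (i := 2) (l := 2) ht hx hy (by omega) (by omega),
    iteratedDeriv_K_snd_eq_fst (i := 1) (l := 3) ht hx hy (by omega) (by omega)⟩
end
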